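/- arXiv:2602.12462 — 2 statements merged into one kernel-verified Lean document; each statement's English description precedes it below -/
import Mathlib

section
/- Let G be a profinite group and let f ∈ F̂₂ have image x^r y^s (r, s ∈ Ẑ) in the abelianization of F̂₂. (i) If a, b, A, B ∈ G are such that a and b each commute with both A and B, then f(a,b) f(A,B) = f(aA, bB). (ii) If a, b, g ∈ G and g commutes with both a and b, then f(a, gb) = f(a,b) g^s. (iii) If a, b, g ∈ G, g commutes with a, and g b = b g^{-1}, then f(a, gb) = f(a,b) g^e, where e = 0 if s ∈ 2Ẑ and e = −1 otherwise. -/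
/-! # Common setup: profinite groups, Ẑ, free profinite F₂, profinite completions,
the Grothendieck–Teichmüller group, braid groups and mapping class groups. -/

universe u

/-- A (topological) group is profinite if it is a compact, Hausdorff, totally
disconnected topological group. -/
class IsProfiniteGroup (G : Type) [Group G] [TopologicalSpace G] extends
    IsTopologicalGroup G, CompactSpace G, T2Space G, TotallyDisconnectedSpace G : Prop

/-- A model of Ẑ, the profinite completion of ℤ: a profinite commutative topological
ring whose underlying additive profinite group is the free profinite group on the
single (topological) generator `1`. These properties characterize Ẑ uniquely. -/
structure ZhatModel : Type 1 where
  R : Type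
  [commRing : CommRing R]
  [top : TopologicalSpace R]
  [topRing : IsTopologicalRing R]
  [cpt : CompactSpace R]
  [t2 : T2Space R]
  [td : TotallyDisconnectedSpace R]
  free : ∀ (G : Type) [Group G] [TopologicalSpace G] [IsProfiniteGroup G] (a : G),
    ∃! φ : ContinuousMonoidHom (Multiplicative R) G,
      φ (Multiplicative.ofAdd (1 : R)) = a

attribute [instance] ZhatModel.commRing ZhatModel.top ZhatModel.topRing
  ZhatModel.cpt ZhatModel.t2 ZhatModel.td

/-- `Z.pow a l` is the profinite power `a ^ l` for `l ∈ Ẑ`: the image of `l` under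
the unique continuous homomorphism `Ẑ → G` sending `1` to `a`. -/
noncomputable def ZhatModel.pow (Z : ZhatModel) {G : Type} [Group G] [TopologicalSpace G]
    [IsProfiniteGroup G] (a : G) (l : Z.R) : G :=
  (Z.free G a).exists.choose (Multiplicative.ofAdd l)

/-- A model of the free profinite group `F̂₂` on two generators `x`, `y`. -/
structure F2Model : Type 1 where
  F : Type
  [grp : Group F]
  [top : TopologicalSpace F]
  [pro : IsProfiniteGroup F]
  x : F
  y : F
  free : ∀ (G : Type) [Group G] [TopologicalSpace G] [IsProfiniteGroup G] (a b : G),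
    ∃! φ : ContinuousMonoidHom F G, φ x = a ∧ φ y = b

attribute [instance] F2Model.grp F2Model.top F2Model.pro

/-- `F2.eval f a b` is `f(a,b)`: the image of `f ∈ F̂₂` under the unique continuous
homomorphism `F̂₂ → G` with `x ↦ a`, `y ↦ b`. -/
noncomputable def F2Model.eval (F2 : F2Model) {G : Type} [Group G] [TopologicalSpace G]
    [IsProfiniteGroup G] (f : F2.F) (a b : G) : G :=
  (F2.free G a b).exists.choose f

/-- A model of the profinite completion of a (discrete) group `B`: a profinite group
`C` together with a homomorphism `ι : B → C` such that every homomorphism from `B`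
to a profinite group extends uniquely to a continuous homomorphism on `C`.  This
universal property characterizes the profinite completion uniquely. -/
structure ProfiniteCompletionModel (B : Type) [Group B] : Type 1 where
  C : Type
  [grp : Group C]
  [top : TopologicalSpace C]
  [pro : IsProfiniteGroup C]
  ι : B →* C
  free : ∀ (H : Type) [Group H] [TopologicalSpace H] [IsProfiniteGroup H] (ψ : B →* H),
    ∃! φ : ContinuousMonoidHom C H, ∀ b, φ (ι b) = ψ b

attribute [instance] ProfiniteCompletionModel.grp ProfiniteCompletionModel.top
  ProfiniteCompletionModel.pro

/-! ## Generic words in a group -/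

section Words

variable {G : Type*} [Group G]

/-- `genY b k = b (k-1) ⋯ b 2 (b 1)² b 2 ⋯ b (k-1)` (equal to `1` for `k ≤ 1`). -/
def genY (b : ℕ → G) : ℕ → G
  | 0 => 1
  | 1 => 1
  | 2 => b 1 * b 1
  | (k+3) => b (k+2) * genY b (k+2) * b (k+2)

/-- `genProd b k = b 1 * b 2 * ⋯ * b k`. -/
def genProd (b : ℕ → G) : ℕ → G
  | 0 => 1
  | (k+1) => genProd b k * b (k+1)

/-- `genW b k = (b 1 ⋯ b (k-1))^k`. -/
def genW (b : ℕ → G) (k : ℕ) : G := (genProd b (k-1))^k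

end Words

/-! ## Braid groups -/

/-- Braid relations on `n` generators (indexed by `Fin n`, where index `i`
stands for `σ_{i+1}`). -/
def braidRels (n : ℕ) : Set (FreeGroup (Fin n)) :=
  {r | (∃ i j : Fin n, (i : ℕ) + 1 = (j : ℕ) ∧
          r = FreeGroup.of i * FreeGroup.of j * FreeGroup.of i *
              (FreeGroup.of j * FreeGroup.of i * FreeGroup.of j)⁻¹) ∨
       (∃ i j : Fin n, (i : ℕ) + 2 ≤ (j : ℕ) ∧
          r = FreeGroup.of i * FreeGroup.of j * (FreeGroup.of j * FreeGroup.of i)⁻¹)}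

/-- The Artin braid group `B_n` on `n` strands, with the `n-1` generators
`σ_1, …, σ_{n-1}`. -/
abbrev BraidGroup (n : ℕ) : Type := PresentedGroup (braidRels (n-1))

/-- The generator `σ_i` of the braid group `B_n` (junk value `1` when `i` is
out of range). -/
def σB (n : ℕ) (i : ℕ) : BraidGroup n :=
  if h : 1 ≤ i ∧ i < n then PresentedGroup.of (⟨i - 1, by omega⟩ : Fin (n-1)) else 1

/-- `η_i = σ_{i-1} ⋯ σ₂ σ₁² σ₂ ⋯ σ_{i-1}` in `B_n`. -/
def ηB (n : ℕ) (i : ℕ) : BraidGroup n := genY (σB n) i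

/-- `ω_i = (σ₁ ⋯ σ_{i-1})^i` in `B_n`. -/
def ωB (n : ℕ) (i : ℕ) : BraidGroup n := genW (σB n) i

/-! ## The Grothendieck-Teichmüller group -/

/-- The standard generators of the pure braid group `P₄ ⊂ B₄`, in the order
`x₁₂, x₁₃, x₁₄, x₂₃, x₂₄, x₃₄`. -/
def xGen : Fin 6 → BraidGroup 4 :=
  ![(σB 4 1)^2,
    σB 4 2 * (σB 4 1)^2 * (σB 4 2)⁻¹,
    σB 4 3 * σB 4 2 * (σB 4 1)^2 * (σB 4 2)⁻¹ * (σB 4 3)⁻¹,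
    (σB 4 2)^2,
    σB 4 3 * (σB 4 2)^2 * (σB 4 3)⁻¹,
    (σB 4 3)^2]

/-- The pure braid group `P₄` as a subgroup of `B₄`. -/
def P4 : Subgroup (BraidGroup 4) := Subgroup.closure (Set.range xGen)

/-- The generators `x_{ij}` as elements of `P₄`. -/
def xP (k : Fin 6) : P4 := ⟨xGen k, Subgroup.subset_closure (Set.mem_range_self k)⟩

/-- The pair `(l, f)` belongs to the Grothendieck–Teichmüller group `GT`:
`l ∈ Ẑ×`, `l - 1 ∈ 2Ẑ`, `f` lies in the closure of the commutator subgroup of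
`F̂₂` and the relations (I), (II), (III) hold. -/
def IsGT (Z : ZhatModel) (F2 : F2Model) (l : Z.R) (f : F2.F) : Prop :=
  IsUnit l ∧ (∃ m : Z.R, l - 1 = 2 * m) ∧
  f ∈ (commutator F2.F).topologicalClosure ∧
  -- (I)
  F2.eval f F2.x F2.y * F2.eval f F2.y F2.x = 1 ∧
  -- (II)
  (∀ m : Z.R, l - 1 = 2 * m →
    F2.eval f (F2.x * F2.y)⁻¹ F2.x * Z.pow ((F2.x * F2.y)⁻¹) m *
      F2.eval f F2.y ((F2.x * F2.y)⁻¹) * Z.pow F2.y m *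
      F2.eval f F2.x F2.y * Z.pow F2.x m = 1) ∧
  -- (III), in (any model of) the profinite completion of the pure braid group P₄
  (∀ CP : ProfiniteCompletionModel P4,
    F2.eval f (CP.ι (xP 0)) (CP.ι (xP 3) * CP.ι (xP 4)) *
      F2.eval f (CP.ι (xP 1) * CP.ι (xP 3)) (CP.ι (xP 5)) =
    F2.eval f (CP.ι (xP 3)) (CP.ι (xP 5)) *
      F2.eval f (CP.ι (xP 0) * CP.ι (xP 1)) (CP.ι (xP 4) * CP.ι (xP 5)) *
      F2.eval f (CP.ι (xP 0)) (CP.ι (xP 3)))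
/-! ## Words for the mapping class group -/

section MCGWords

variable {G : Type*} [Group G] (d : G) (a : ℕ → G)

/-- `t_k = a_{2k} a_{2k-1} a_{2k+1} a_{2k}`. -/
def tA (k : ℕ) : G := a (2*k) * a (2*k - 1) * a (2*k + 1) * a (2*k)

/-- `d' = y₅ d y₅⁻¹`. -/
def dpA : G := genY a 5 * d * (genY a 5)⁻¹

/-- `d₃ = (t₁⁻¹t₂⁻¹ d t₂t₁)(t₂⁻¹ d t₂) d a₁⁻¹ a₃⁻¹ a₅⁻¹`. -/
def d3A : G :=
  ((tA a 1)⁻¹ * (tA a 2)⁻¹ * d * tA a 2 * tA a 1) * ((tA a 2)⁻¹ * d * tA a 2) * d *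
    (a 1)⁻¹ * (a 3)⁻¹ * (a 5)⁻¹

/-- The element `t₂t₁t₃t₂`. -/
def tfour : G := tA a 2 * tA a 1 * tA a 3 * tA a 2

/-- The relator expressing relation (C'): `d'` commutes with `(t₂t₁t₃t₂) d (t₂t₁t₃t₂)⁻¹`. -/
def relCpA : G :=
  dpA d a * (tfour a * d * (tfour a)⁻¹) * (dpA d a)⁻¹ * (tfour a * d * (tfour a)⁻¹)⁻¹

/-- `v₁ = d'`, `v_i = (t_{i-1} t_i) v_{i-1} (t_{i-1} t_i)⁻¹`. -/
def vA : ℕ → G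
  | 0 => 1
  | 1 => dpA d a
  | (i+2) => (tA a (i+1) * tA a (i+2)) * vA (i+1) * (tA a (i+1) * tA a (i+2))⁻¹

/-- `u_i = a_{2i} a_{2i+1} a_{2i+2} v_i (a_{2i+2} a_{2i+1} a_{2i} a_{2i-1})⁻¹`. -/
def uA (i : ℕ) : G :=
  a (2*i) * a (2*i+1) * a (2*i+2) * vA d a i *
    (a (2*i+2) * a (2*i+1) * a (2*i) * a (2*i - 1))⁻¹

/-- `d_g = (u₁⋯u_{g-1})⁻¹ a₁ (u₁⋯u_{g-1})`. -/
def dgA (g : ℕ) : G :=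
  (genProd (uA d a) (g-1))⁻¹ * a 1 * genProd (uA d a) (g-1)

/-- The relator of relation (D): `y_{2g+1} d_g y_{2g+1}⁻¹ = d_g`. -/
def relDA (g : ℕ) : G :=
  genY a (2*g+1) * dgA d a g * (genY a (2*g+1))⁻¹ * (dgA d a g)⁻¹

/-- `genProd2 b k = b 2 * b 3 * ⋯ * b k`. -/
def genProd2 (b : ℕ → G) : ℕ → G
  | 0 => 1
  | 1 => 1
  | (k+2) => genProd2 b (k+1) * b (k+2)

/-- `TTA a i = (t₂⋯t_i)·(t₁⋯t_{i-1})`. -/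
def TTA (i : ℕ) : G := genProd2 (tA a) i * genProd (tA a) (i-1)

/-- The sequence `d₁ = a₁`, `d₂ = d`,
`d_{i+1} = a_{2i+1}⁻¹ a_{2i-1}⁻¹ d_{i-1}⁻¹ g_{2,i} g_{1,i} d_i`
where `g_{1,i} = t_i⁻¹ d_i t_i` and `g_{2,i} = (t₂⋯t_i t₁⋯t_{i-1})⁻¹ d (t₂⋯t_i t₁⋯t_{i-1})`. -/
def dSeq : ℕ → G
  | 0 => 1
  | 1 => a 1
  | 2 => d
  | (i+3) =>
    (a (2*(i+2)+1))⁻¹ * (a (2*(i+2) - 1))⁻¹ * (dSeq (i+1))⁻¹ *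
      ((TTA a (i+2))⁻¹ * d * TTA a (i+2)) *
      ((tA a (i+2))⁻¹ * dSeq (i+2) * tA a (i+2)) * dSeq (i+2)

/-- `g_{1,i} = t_i⁻¹ d_i t_i`. -/
def g1A (i : ℕ) : G := (tA a i)⁻¹ * dSeq d a i * tA a i

/-- `g_{2,i} = (t₂⋯t_i · t₁⋯t_{i-1})⁻¹ d (t₂⋯t_i · t₁⋯t_{i-1})`. -/
def g2A (i : ℕ) : G := (TTA a i)⁻¹ * d * TTA a i

/-- `d′_i = y_{2i+1} d_i y_{2i+1}⁻¹`. -/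
def dpSeq (i : ℕ) : G := genY a (2*i+1) * dSeq d a i * (genY a (2*i+1))⁻¹

/-- `g′_{1,i} = t_i⁻¹ d′_i t_i`. -/
def g1pA (i : ℕ) : G := (tA a i)⁻¹ * dpSeq d a i * tA a i

/-- `g′_{2,i} = (t₂⋯t_i · t₁⋯t_{i-1})⁻¹ d′ (t₂⋯t_i · t₁⋯t_{i-1})`. -/
def g2pA (i : ℕ) : G := (TTA a i)⁻¹ * dpA d a * TTA a i

/-- `W_k = (t₁⋯t_{k-1})^k`. -/
def WWA (k : ℕ) : G := genW (tA a) k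

/-- `Y_k = t_{k-1}⋯t₂t₁²t₂⋯t_{k-1}`. -/
def YYA (k : ℕ) : G := genY (tA a) k

end MCGWords

/-! ## The Wajnryb presentation of the mapping class group `Γ_{g,1}` -/

/-- The free-group generator `d`. -/
def dF (g : ℕ) : FreeGroup (Fin (2*g+1)) := FreeGroup.of ⟨0, by omega⟩

/-- The free-group generators `a_i`, `1 ≤ i ≤ 2g` (junk value `1` out of range). -/
def aF (g : ℕ) (i : ℕ) : FreeGroup (Fin (2*g+1)) :=
  if h : 1 ≤ i ∧ i ≤ 2*g then FreeGroup.of ⟨i, by omega⟩ else 1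

/-- The relators of the Wajnryb presentation of `Γ_{g,1}`: relations (A), (B),
(C) (when `g ≥ 3`) and (C') (when `g ≥ 4`). -/
def mcgRels (g : ℕ) : Set (FreeGroup (Fin (2*g+1))) :=
  {r | (∃ i : ℕ, 1 ≤ i ∧ i + 1 ≤ 2*g ∧
          r = aF g i * aF g (i+1) * aF g i * (aF g (i+1) * aF g i * aF g (i+1))⁻¹) ∨
       (∃ i j : ℕ, 1 ≤ i ∧ j ≤ 2*g ∧ i + 2 ≤ j ∧
          r = aF g i * aF g j * (aF g j * aF g i)⁻¹) ∨
       (r = dF g * aF g 4 * dF g * (aF g 4 * dF g * aF g 4)⁻¹) ∨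
       (∃ j : ℕ, 1 ≤ j ∧ j ≤ 2*g ∧ j ≠ 4 ∧
          r = dF g * aF g j * (aF g j * dF g)⁻¹) ∨
       (r = dF g * dpA (dF g) (aF g) * ((aF g 1 * aF g 2 * aF g 3)^4)⁻¹) ∨
       (3 ≤ g ∧ r = d3A (dF g) (aF g) * aF g 6 * d3A (dF g) (aF g) *
          (aF g 6 * d3A (dF g) (aF g) * aF g 6)⁻¹) ∨
       (4 ≤ g ∧ r = relCpA (dF g) (aF g))}

/-- The mapping class group `Γ_{g,1}` of a genus-`g` surface with one marked point,
via its Wajnryb presentation. -/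
abbrev Gamma1 (g : ℕ) : Type := PresentedGroup (mcgRels g)

/-- The generator `d` of `Γ_{g,1}`. -/
def dM (g : ℕ) : Gamma1 g := PresentedGroup.of ⟨0, by omega⟩

/-- The generators `a_i` of `Γ_{g,1}` (junk value `1` out of range). -/
def aM (g : ℕ) (i : ℕ) : Gamma1 g :=
  if h : 1 ≤ i ∧ i ≤ 2*g then PresentedGroup.of ⟨i, by omega⟩ else 1

/-- The mapping class group `Γ_{g,0}` of a closed genus-`g` surface, obtained from the
Wajnryb presentation of `Γ_{g,1}` by adding the single relation (D). -/
abbrev Gamma0 (g : ℕ) : Type :=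
  PresentedGroup (mcgRels g ∪ {relDA (dF g) (aF g) g})

/-- The generator `d` of `Γ_{g,0}`. -/
def dM0 (g : ℕ) : Gamma0 g := PresentedGroup.of ⟨0, by omega⟩

/-- The generators `a_i` of `Γ_{g,0}` (junk value `1` out of range). -/
def aM0 (g : ℕ) (i : ℕ) : Gamma0 g :=
  if h : 1 ≤ i ∧ i ≤ 2*g then PresentedGroup.of ⟨i, by omega⟩ else 1

/-! Evaluation at `(a, b)` is the unique continuous homomorphism `F̂₂ → G` with `x ↦ a`,
`y ↦ b`, and a closed subgroup of `F̂₂` containing `x` and `y` is everything. For (i), the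
evaluations at `(a, b)` and at `(A, B)` have elementwise commuting images, so their pointwise
product is a continuous homomorphism: the evaluation at `(a * A, b * B)`. When `a` and `b`
commute, evaluation kills the closed commutator subgroup, so `f(a, b) = a^r b^s`; in particular
`f(1, g) = g^s`, and (ii) follows from (i).

For (iii), let `K` be the closure of `⟨g⟩`. The pairs `(w(a, b), w(a, g * b))` form a closed
subgroup of `G × G` made of pairs `(p, p)` with `p` centralizing `K` and pairs `(p, p * g⁻¹)` with
`p` inverting `K`. Squares, hence commutators, are of the first kind; writing
`f = x^r y^s c` with `c` in the closed commutator subgroup, a single factor `y` of the second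
kind is left over exactly when `s` is odd. -/

theorem IsProfiniteGroup.of_isClosed {G : Type} [Group G] [TopologicalSpace G]
    [IsProfiniteGroup G] (S : Subgroup G) (hS : IsClosed (S : Set G)) :
    IsProfiniteGroup S :=
  have : CompactSpace S := isCompact_iff_compactSpace.mp hS.isCompact
  {}

instance ZhatModel.instIsProfiniteGroup (Z : ZhatModel) : IsProfiniteGroup (Multiplicative Z.R) :=
  have : CompactSpace (Multiplicative Z.R) := inferInstanceAs (CompactSpace Z.R)
  have : T2Space (Multiplicative Z.R) := inferInstanceAs (T2Space Z.R)
  have : TotallyDisconnectedSpace (Multiplicative Z.R) :=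
    inferInstanceAs (TotallyDisconnectedSpace Z.R)
  {}

namespace ZhatModel

variable (Z : ZhatModel) {G : Type} [Group G] [TopologicalSpace G] [IsProfiniteGroup G]

theorem mem_of_isClosed (S : AddSubgroup Z.R) (hS : IsClosed (S : Set Z.R)) (h1 : (1 : Z.R) ∈ S)
    (l : Z.R) : l ∈ S := by
  let T := AddSubgroup.toSubgroup S
  have : IsProfiniteGroup T := IsProfiniteGroup.of_isClosed T (hS.preimage continuous_toAdd)
  obtain ⟨φ, hφ, -⟩ := Z.free T ⟨Multiplicative.ofAdd 1, h1⟩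
  have hid : (ContinuousMonoidHom.mk T.subtype continuous_subtype_val).comp φ =
      ContinuousMonoidHom.id _ :=
    (Z.free _ _).unique (congrArg Subtype.val hφ) rfl
  have := (φ (Multiplicative.ofAdd l)).2
  rwa [show ((φ (Multiplicative.ofAdd l) : T) : Multiplicative Z.R) = Multiplicative.ofAdd l from
    DFunLike.congr_fun hid _] at this

noncomputable def powHom (a : G) : ContinuousMonoidHom (Multiplicative Z.R) G :=
  (Z.free G a).exists.choose

theorem powHom_one (a : G) : Z.powHom a (Multiplicative.ofAdd 1) = a :=
  (Z.free G a).exists.choose_spec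

theorem pow_one (a : G) : Z.pow a 1 = a := Z.powHom_one a

theorem pow_add (a : G) (l l' : Z.R) : Z.pow a (l + l') = Z.pow a l * Z.pow a l' :=
  map_mul (Z.powHom a) (Multiplicative.ofAdd l) (Multiplicative.ofAdd l')

theorem map_pow {H : Type} [Group H] [TopologicalSpace H] [IsProfiniteGroup H]
    (θ : ContinuousMonoidHom G H) (a : G) (l : Z.R) : θ (Z.pow a l) = Z.pow (θ a) l := by
  have h : θ.comp (Z.powHom a) = Z.powHom (θ a) :=
    (Z.free H (θ a)).unique (congrArg θ (Z.powHom_one a)) (Z.powHom_one _)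
  exact DFunLike.congr_fun h _

theorem one_pow (l : Z.R) : Z.pow (1 : G) l = 1 := by
  simpa using (Z.map_pow (1 : ContinuousMonoidHom G G) 1 l).symm

theorem pow_mem {S : Subgroup G} (hS : IsClosed (S : Set G)) {a : G} (ha : a ∈ S) (l : Z.R) :
    Z.pow a l ∈ S := by
  refine Z.mem_of_isClosed (S.comap (Z.powHom a).toMonoidHom).toAddSubgroup
    (hS.preimage ((map_continuous (Z.powHom a)).comp continuous_ofAdd)) ?_ l
  change Z.powHom a (Multiplicative.ofAdd 1) ∈ S
  rwa [powHom_one]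

theorem even_or_odd (s : Z.R) : Even s ∨ Odd s := by
  let P : AddSubgroup Z.R :=
    { carrier := {t | Even t ∨ Odd t}
      zero_mem' := Or.inl .zero
      add_mem' := by
        rintro u v (hu | hu) (hv | hv)
        exacts [Or.inl (hu.add hv), Or.inr (hu.add_odd hv), Or.inr (hu.add_even hv),
          Or.inl (hu.add_odd hv)]
      neg_mem' := by
        rintro u (hu | hu)
        exacts [Or.inl hu.neg, Or.inr hu.neg] }
  have hP : IsClosed (P : Set Z.R) := by
    have h : (P : Set Z.R) = Set.range (fun r => r + r) ∪ Set.range (fun m => 2 * m + 1) := by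
      ext t
      simp only [Set.mem_union, Set.mem_range, eq_comm (b := t)]
      rfl
    rw [h]
    exact (isCompact_range (by fun_prop)).isClosed.union (isCompact_range (by fun_prop)).isClosed
  exact Z.mem_of_isClosed P hP (Or.inr odd_one) s

end ZhatModel

open scoped commutatorElement

theorem Subgroup.topologicalClosure_commutator_le {F : Type*} [Group F] [TopologicalSpace F]
    [IsTopologicalGroup F] {S : Subgroup F} (hS : IsClosed (S : Set F)) (h : ∀ u v : F, ⁅u, v⁆ ∈ S) :
    (_root_.commutator F).topologicalClosure ≤ S :=
  Subgroup.topologicalClosure_minimal _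
    (by rw [_root_.commutator_def, Subgroup.commutator_le]; exact fun u _ v _ => h u v) hS

theorem Subgroup.topologicalClosure_commutator_le_of_mul_self_mem {F : Type*} [Group F]
    [TopologicalSpace F] [IsTopologicalGroup F] {S : Subgroup F} (hS : IsClosed (S : Set F))
    (h : ∀ u : F, u * u ∈ S) : (_root_.commutator F).topologicalClosure ≤ S := by
  refine Subgroup.topologicalClosure_commutator_le hS fun u v => ?_
  have hsq : ⁅u, v⁆ = u * u * ((u⁻¹ * v) * (u⁻¹ * v)) * (v⁻¹ * v⁻¹) := by
    rw [commutatorElement_def]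
    group
  rw [hsq]
  exact mul_mem (mul_mem (h u) (h _)) (h _)

namespace F2Model

variable (F2 : F2Model) {G : Type} [Group G] [TopologicalSpace G] [IsProfiniteGroup G]

noncomputable def evalHom (a b : G) : ContinuousMonoidHom F2.F G :=
  (F2.free G a b).exists.choose

theorem eval_eq_evalHom (f : F2.F) (a b : G) : F2.eval f a b = F2.evalHom a b f := rfl

@[simp]
theorem evalHom_x (a b : G) : F2.evalHom a b F2.x = a := (F2.free G a b).exists.choose_spec.1

@[simp]
theorem evalHom_y (a b : G) : F2.evalHom a b F2.y = b := (F2.free G a b).exists.choose_spec.2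

theorem eval_map_x_map_y (θ : ContinuousMonoidHom F2.F G) (f : F2.F) :
    F2.eval f (θ F2.x) (θ F2.y) = θ f :=
  DFunLike.congr_fun ((F2.free G _ _).unique (F2.free G _ _).exists.choose_spec ⟨rfl, rfl⟩) f

theorem mem_of_isClosed (S : Subgroup F2.F) (hS : IsClosed (S : Set F2.F)) (hx : F2.x ∈ S)
    (hy : F2.y ∈ S) (w : F2.F) : w ∈ S := by
  have : IsProfiniteGroup S := IsProfiniteGroup.of_isClosed S hS
  obtain ⟨φ, ⟨hφx, hφy⟩, -⟩ := F2.free S ⟨F2.x, hx⟩ ⟨F2.y, hy⟩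
  have hid : (ContinuousMonoidHom.mk S.subtype continuous_subtype_val).comp φ =
      ContinuousMonoidHom.id _ :=
    (F2.free _ _ _).unique ⟨congrArg Subtype.val hφx, congrArg Subtype.val hφy⟩ ⟨rfl, rfl⟩
  have := (φ w).2
  rwa [show ((φ w : S) : F2.F) = w from DFunLike.congr_fun hid w] at this

theorem map_mem_of_isClosed {H : Type*} [Group H] [TopologicalSpace H]
    (θ : ContinuousMonoidHom F2.F H) {S : Subgroup H} (hS : IsClosed (S : Set H))
    (hx : θ F2.x ∈ S) (hy : θ F2.y ∈ S) (w : F2.F) : θ w ∈ S :=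
  F2.mem_of_isClosed (S.comap θ.toMonoidHom) (hS.preimage (map_continuous θ)) hx hy w

theorem commute_map_map (θ₁ θ₂ : ContinuousMonoidHom F2.F G)
    (hxx : Commute (θ₁ F2.x) (θ₂ F2.x)) (hxy : Commute (θ₁ F2.x) (θ₂ F2.y))
    (hyx : Commute (θ₁ F2.y) (θ₂ F2.x)) (hyy : Commute (θ₁ F2.y) (θ₂ F2.y)) (u v : F2.F) :
    Commute (θ₁ u) (θ₂ v) := by
  have hclosed (s : Set G) : IsClosed (Subgroup.centralizer s : Set G) :=
    Set.isClosed_centralizer s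
  have hu : θ₁ u ∈ Subgroup.centralizer {θ₂ F2.x, θ₂ F2.y} := by
    refine F2.map_mem_of_isClosed θ₁ (hclosed _) ?_ ?_ u <;>
      simp [Subgroup.mem_centralizer_iff, hxx.eq, hxy.eq, hyx.eq, hyy.eq]
  simp only [Subgroup.mem_centralizer_iff, Set.mem_insert_iff, Set.mem_singleton_iff,
    forall_eq_or_imp, forall_eq] at hu
  have hv : θ₂ v ∈ Subgroup.centralizer {θ₁ u} := by
    refine F2.map_mem_of_isClosed θ₂ (hclosed _) ?_ ?_ v <;>
      simp [Subgroup.mem_centralizer_iff, hu.1, hu.2]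
  exact Subgroup.mem_centralizer_iff.mp hv _ rfl

theorem eval_mul_eval (f : F2.F) {a b A B : G} (haA : Commute a A) (haB : Commute a B)
    (hbA : Commute b A) (hbB : Commute b B) :
    F2.eval f a b * F2.eval f A B = F2.eval f (a * A) (b * B) := by
  set φ := F2.evalHom a b
  set ψ := F2.evalHom A B
  have hcomm := F2.commute_map_map φ ψ (by simpa [φ, ψ]) (by simpa [φ, ψ]) (by simpa [φ, ψ])
    (by simpa [φ, ψ])
  let θ : ContinuousMonoidHom F2.F G :=
    ⟨(φ.toMonoidHom.noncommCoprod ψ.toMonoidHom hcomm).comp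
      ((MonoidHom.id _).prod (MonoidHom.id _)), (map_continuous φ).mul (map_continuous ψ)⟩
  have hθ (w : F2.F) : θ w = φ w * ψ w := rfl
  rw [F2.eval_eq_evalHom f a b, F2.eval_eq_evalHom f A B, ← hθ, ← F2.eval_map_x_map_y θ f,
    hθ, hθ]
  simp [φ, ψ]

end F2Model

section Inverts

variable {G : Type*} [Group G]

def Inverts (p : G) (K : Subgroup G) : Prop := ∀ k ∈ K, p * k = k⁻¹ * p

variable {K : Subgroup G} {p q : G}

theorem Inverts.mul_left_of_mem_centralizer (hq : Inverts q K)
    (hp : p ∈ Subgroup.centralizer K) : Inverts (p * q) K := fun k hk => by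
  rw [mul_assoc, hq k hk, ← mul_assoc, ← Subgroup.mem_centralizer_iff.mp hp k⁻¹ (K.inv_mem hk),
    mul_assoc]

theorem Inverts.mul_right_of_mem_centralizer (hp : Inverts p K)
    (hq : q ∈ Subgroup.centralizer K) : Inverts (p * q) K := fun k hk => by
  rw [mul_assoc, ← Subgroup.mem_centralizer_iff.mp hq k hk, ← mul_assoc, hp k hk, mul_assoc]

theorem Inverts.mul_mem_centralizer (hp : Inverts p K) (hq : Inverts q K) :
    p * q ∈ Subgroup.centralizer K := Subgroup.mem_centralizer_iff.mpr fun k hk => Eq.symm <| by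
  rw [mul_assoc, hq k hk, ← mul_assoc, hp k⁻¹ (K.inv_mem hk), inv_inv, mul_assoc]

theorem Inverts.inv (hp : Inverts p K) : Inverts p⁻¹ K := fun k hk => by
  have h := hp k⁻¹ (K.inv_mem hk)
  rw [inv_inv] at h
  calc p⁻¹ * k = p⁻¹ * (k * p) * p⁻¹ := by group
    _ = k⁻¹ * p⁻¹ := by rw [← h]; group

theorem Inverts.mul_inv_mul_mul_inv {g : G} (hq : Inverts q K) (hg : g ∈ K) :
    p * g⁻¹ * (q * g⁻¹) = p * q := by
  rw [mul_assoc, ← mul_assoc g⁻¹, ← hq g hg]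
  group

theorem isClosed_setOf_inverts [TopologicalSpace G] [IsTopologicalGroup G] [T2Space G]
    (K : Subgroup G) : IsClosed {p : G | Inverts p K} := by
  simp only [Inverts, Set.ofPred_forall]
  exact isClosed_iInter fun k => isClosed_iInter fun _ =>
    isClosed_eq (continuous_mul_const k) (continuous_const_mul k⁻¹)

end Inverts

section SignedDiagonal

variable {G : Type*} [Group G] (K : Subgroup G)

def diagCentralizer : Subgroup (G × G) where
  carrier := {p | p.2 = p.1 ∧ p.1 ∈ Subgroup.centralizer K}
  mul_mem' := by
    rintro p q ⟨hp2, hp⟩ ⟨hq2, hq⟩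
    exact ⟨by simp only [Prod.fst_mul, Prod.snd_mul, hp2, hq2], mul_mem hp hq⟩
  one_mem' := ⟨rfl, one_mem _⟩
  inv_mem' := by
    rintro p ⟨hp2, hp⟩
    exact ⟨by simp only [Prod.fst_inv, Prod.snd_inv, hp2], inv_mem hp⟩

def signedDiag (g : G) (hg : g ∈ K) : Subgroup (G × G) where
  carrier := {p | p ∈ diagCentralizer K ∨ (p.2 = p.1 * g⁻¹ ∧ Inverts p.1 K)}
  mul_mem' := by
    rintro p q (⟨hp2, hp⟩ | ⟨hp2, hp⟩) (⟨hq2, hq⟩ | ⟨hq2, hq⟩)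
    · exact .inl (mul_mem ⟨hp2, hp⟩ ⟨hq2, hq⟩)
    · refine .inr ⟨?_, hq.mul_left_of_mem_centralizer hp⟩
      simp only [Prod.fst_mul, Prod.snd_mul, hp2, hq2, mul_assoc]
    · refine .inr ⟨?_, hp.mul_right_of_mem_centralizer hq⟩
      simp only [Prod.fst_mul, Prod.snd_mul, hp2, hq2, mul_assoc,
        Subgroup.mem_centralizer_iff.mp hq g⁻¹ (K.inv_mem hg)]
    · refine .inl ⟨?_, hp.mul_mem_centralizer hq⟩
      simp only [Prod.fst_mul, Prod.snd_mul, hp2, hq2, hq.mul_inv_mul_mul_inv hg]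
  one_mem' := .inl (one_mem _)
  inv_mem' := by
    rintro p (hp | ⟨hp2, hp⟩)
    · exact .inl (inv_mem hp)
    · refine .inr ⟨?_, hp.inv⟩
      simp only [Prod.fst_inv, Prod.snd_inv, hp2, mul_inv_rev, inv_inv,
        hp.inv g⁻¹ (K.inv_mem hg)]

variable {K}

theorem mul_self_mem_diagCentralizer {g : G} {hg : g ∈ K} {p : G × G}
    (hp : p ∈ signedDiag K g hg) : p * p ∈ diagCentralizer K := by
  rcases hp with hp | ⟨hp2, hp⟩
  · exact mul_mem hp hp
  · refine ⟨?_, hp.mul_mem_centralizer hp⟩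
    simp only [Prod.fst_mul, Prod.snd_mul, hp2, hp.mul_inv_mul_mul_inv hg]

variable [TopologicalSpace G] [IsTopologicalGroup G] [T2Space G]

theorem isClosed_diagCentralizer (K : Subgroup G) : IsClosed (diagCentralizer K : Set (G × G)) :=
  (isClosed_eq continuous_snd continuous_fst).inter
    ((Set.isClosed_centralizer _).preimage continuous_fst)

theorem isClosed_signedDiag (g : G) (hg : g ∈ K) : IsClosed (signedDiag K g hg : Set (G × G)) :=
  (isClosed_diagCentralizer K).union <|
    (isClosed_eq continuous_snd (continuous_fst.mul continuous_const)).inter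
      ((isClosed_setOf_inverts K).preimage continuous_fst)

end SignedDiagonal

section ClosureZpowers

variable {G : Type*} [Group G] [TopologicalSpace G] [IsTopologicalGroup G] [T2Space G]

theorem mem_centralizer_topologicalClosure_zpowers {g a : G} (h : Commute g a) :
    a ∈ Subgroup.centralizer ((Subgroup.zpowers g).topologicalClosure : Set G) := by
  have hon : Set.EqOn (· * a) (a * ·) (Subgroup.zpowers g) := by
    rintro _ ⟨n, rfl⟩
    exact (h.zpow_left n).eq
  rw [Subgroup.mem_centralizer_iff, Subgroup.topologicalClosure_coe]
  exact hon.closure (continuous_mul_const a) (continuous_const_mul a)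

theorem inverts_topologicalClosure_zpowers {g b : G} (h : g * b = b * g⁻¹) :
    Inverts b (Subgroup.zpowers g).topologicalClosure := by
  have hb : SemiconjBy b g g⁻¹ := by
    rw [SemiconjBy, eq_inv_mul_iff_mul_eq, ← mul_assoc, h, inv_mul_cancel_right]
  have hon : Set.EqOn (b * ·) (·⁻¹ * b) (Subgroup.zpowers g) := by
    rintro _ ⟨n, rfl⟩
    simpa [inv_zpow] using (hb.zpow_right n).eq
  intro k hk
  rw [← SetLike.mem_coe, Subgroup.topologicalClosure_coe] at hk
  exact hon.closure (continuous_const_mul b) (continuous_inv.mul continuous_const) hk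

end ClosureZpowers

theorem F2Model.evalHom_prod_mem_signedDiag (F2 : F2Model) {G : Type} [Group G]
    [TopologicalSpace G] [IsProfiniteGroup G] {K : Subgroup G} {a b g : G} (hg : g ∈ K)
    (ha : a ∈ Subgroup.centralizer (K : Set G)) (hb : Inverts b K) (hgb : g * b = b * g⁻¹)
    (w : F2.F) : (F2.evalHom a b).prod (F2.evalHom a (g * b)) w ∈ signedDiag K g hg :=
  F2.map_mem_of_isClosed _ (isClosed_signedDiag g hg) (.inl ⟨by simp, by simpa using ha⟩)
    (.inr ⟨by simp [hgb], by simpa using hb⟩) w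

section Abelianization

variable {Z : ZhatModel} {F2 : F2Model} {f : F2.F} {r s : Z.R}
  {G : Type} [Group G] [TopologicalSpace G] [IsProfiniteGroup G]

theorem F2Model.exists_eq_pow_mul_pow_mul
    (habel : (QuotientGroup.mk f : F2.F ⧸ (commutator F2.F).topologicalClosure) =
      QuotientGroup.mk (Z.pow F2.x r * Z.pow F2.y s)) :
    ∃ c ∈ (commutator F2.F).topologicalClosure, f = Z.pow F2.x r * Z.pow F2.y s * c :=
  ⟨_, QuotientGroup.eq.mp habel.symm, (mul_inv_cancel_left _ _).symm⟩

theorem F2Model.eval_of_commute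
    (habel : (QuotientGroup.mk f : F2.F ⧸ (commutator F2.F).topologicalClosure) =
      QuotientGroup.mk (Z.pow F2.x r * Z.pow F2.y s)) {a b : G} (hab : Commute a b) :
    F2.eval f a b = Z.pow a r * Z.pow b s := by
  have hcomm := F2.commute_map_map (F2.evalHom a b) (F2.evalHom a b) (by simp) (by simpa)
    (by simpa using hab.symm) (by simp)
  have hker : (commutator F2.F).topologicalClosure ≤ (F2.evalHom a b).toMonoidHom.ker :=
    Subgroup.topologicalClosure_commutator_le
      (isClosed_singleton.preimage (map_continuous (F2.evalHom a b)))
      fun u v => by simpa [commutatorElement_eq_one_iff_commute] using hcomm u v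
  obtain ⟨c, hc, rfl⟩ := F2Model.exists_eq_pow_mul_pow_mul habel
  have hc1 : F2.evalHom a b c = 1 := hker hc
  rw [F2.eval_eq_evalHom, map_mul, map_mul, hc1, mul_one, Z.map_pow, Z.map_pow,
    F2.evalHom_x, F2.evalHom_y]

theorem F2Model.eval_mul_snd_of_commute
    (habel : (QuotientGroup.mk f : F2.F ⧸ (commutator F2.F).topologicalClosure) =
      QuotientGroup.mk (Z.pow F2.x r * Z.pow F2.y s)) {a b g : G} (hga : Commute g a)
    (hgb : Commute g b) :
    F2.eval f a (g * b) = F2.eval f a b * Z.pow g s := by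
  rw [← one_mul (Z.pow g s), ← Z.one_pow r, ← F2Model.eval_of_commute habel (.one_left g),
    F2.eval_mul_eval f (.one_right a) hga.symm (.one_right b) hgb.symm, mul_one, hgb.eq]

theorem F2Model.eval_mul_snd_of_inverts
    (habel : (QuotientGroup.mk f : F2.F ⧸ (commutator F2.F).topologicalClosure) =
      QuotientGroup.mk (Z.pow F2.x r * Z.pow F2.y s)) {a b g : G} (hga : Commute g a)
    (hgb : g * b = b * g⁻¹) :
    (Even s → F2.eval f a (g * b) = F2.eval f a b) ∧
      (Odd s → F2.eval f a (g * b) = F2.eval f a b * g⁻¹) := by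
  set K := (Subgroup.zpowers g).topologicalClosure
  have hg : g ∈ K := Subgroup.le_topologicalClosure _ (Subgroup.mem_zpowers g)
  have ha : a ∈ Subgroup.centralizer (K : Set G) := mem_centralizer_topologicalClosure_zpowers hga
  let Φ := (F2.evalHom a b).prod (F2.evalHom a (g * b))
  have hΦ := F2.evalHom_prod_mem_signedDiag hg ha (inverts_topologicalClosure_zpowers hgb) hgb
  let S := (diagCentralizer K).comap Φ.toMonoidHom
  have hS : IsClosed (S : Set F2.F) := (isClosed_diagCentralizer K).preimage (map_continuous Φ)
  have hmem (w : F2.F) (hw : w ∈ S) :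
      F2.evalHom a (g * b) w = F2.evalHom a b w ∧ F2.evalHom a b w ∈ Subgroup.centralizer K :=
    hw
  have hsq (w : F2.F) : w * w ∈ S := by
    change Φ (w * w) ∈ diagCentralizer K
    rw [map_mul]
    exact mul_self_mem_diagCentralizer (hΦ w)
  have hx : Z.pow F2.x r ∈ S := Z.pow_mem hS ⟨by simp [Φ], by simpa [Φ] using ha⟩ r
  have hcomm := Subgroup.topologicalClosure_commutator_le_of_mul_self_mem hS hsq
  obtain ⟨c, hc, rfl⟩ := F2Model.exists_eq_pow_mul_pow_mul habel
  constructor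
  · rintro ⟨t, rfl⟩
    rw [Z.pow_add]
    exact (hmem _ (mul_mem (mul_mem hx (hsq _)) (hcomm hc))).1
  · rintro ⟨t, rfl⟩
    obtain ⟨u, huS, hf⟩ : ∃ u ∈ S, Z.pow F2.x r * Z.pow F2.y (2 * t + 1) * c = u * F2.y * c :=
      ⟨_, mul_mem hx (hsq _), by rw [Z.pow_add, Z.pow_one, two_mul, Z.pow_add, ← mul_assoc]⟩
    obtain ⟨hu, -⟩ := hmem u huS
    obtain ⟨hc', hcK⟩ := hmem c (hcomm hc)
    have hgc := Subgroup.mem_centralizer_iff.mp hcK g⁻¹ (K.inv_mem hg)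
    rw [F2.eval_eq_evalHom, F2.eval_eq_evalHom, hf, map_mul, map_mul, map_mul, map_mul, hu, hc',
      evalHom_y, evalHom_y, hgb]
    simp only [mul_assoc, hgc]
end Abelianization

/-- The Haiku Lemma: let `f ∈ F̂₂` have image `x^r y^s` in the abelianization of `F̂₂`
(the quotient by the closure of the commutator subgroup).  Then in any profinite
group `G`: (i) if `a, b` both commute with `A, B` then `f(a,b) f(A,B) = f(aA, bB)`;
(ii) if `g` commutes with `a` and `b` then `f(a, gb) = f(a,b) g^s`; (iii) if `g`
commutes with `a` and `gb = bg⁻¹` then `f(a, gb) = f(a,b) g^e` with `e = 0` if `s`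
is even and `e = -1` otherwise. -/
theorem haiku_lemma
    (Z : ZhatModel) (F2 : F2Model) (f : F2.F) (r s : Z.R)
    (habel : (QuotientGroup.mk f : F2.F ⧸ (commutator F2.F).topologicalClosure) =
      QuotientGroup.mk (Z.pow F2.x r * Z.pow F2.y s))
    (G : Type) [Group G] [TopologicalSpace G] [IsProfiniteGroup G] :
    (∀ a b A B : G, Commute a A → Commute a B → Commute b A → Commute b B →
      F2.eval f a b * F2.eval f A B = F2.eval f (a * A) (b * B)) ∧
    (∀ a b gg : G, Commute gg a → Commute gg b →
      F2.eval f a (gg * b) = F2.eval f a b * Z.pow gg s) ∧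
    (∀ a b gg : G, Commute gg a → gg * b = b * gg⁻¹ →
      ((∃ s' : Z.R, s = 2 * s') → F2.eval f a (gg * b) = F2.eval f a b) ∧
      (¬(∃ s' : Z.R, s = 2 * s') → F2.eval f a (gg * b) = F2.eval f a b * gg⁻¹)) := by
  refine ⟨fun _ _ _ _ haA haB hbA hbB => F2.eval_mul_eval f haA haB hbA hbB,
    fun _ _ _ hga hgb => F2Model.eval_mul_snd_of_commute habel hga hgb,
    fun _ _ _ hga hgb => ?_⟩
  obtain ⟨heven, hodd⟩ := F2Model.eval_mul_snd_of_inverts habel hga hgb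
  simp only [← even_iff_exists_two_mul]
  exact ⟨heven, fun hs => hodd ((Z.even_or_odd s).resolve_left hs)⟩
end

section
/- Let g ≥ 2. In Γ_{g,1}: (i) y_i commutes with d and with d′ for i = 2, 3, 4, and y_i² commutes with d and with d′ for every i with 5 ≤ i ≤ g+1; (ii) d′ = y_i d y_i^{-1} = y_i^{-1} d y_i for every i with 5 ≤ i ≤ g+1. -/
/-! # Common setup: profinite groups, Ẑ, free profinite F₂, profinite completions,
the Grothendieck–Teichmüller group, braid groups and mapping class groups. -/

universe u

/-!
Relation (B) says `d′ = d⁻¹ w` with `w = (a₁a₂a₃)⁴`. The braid relations make `y₅` commute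
with `a₁, a₂, a₃`, hence with `w`; together with `y₅ d y₅⁻¹ = d′` this shows that conjugation
by `y₅` swaps `d` and `d′`. Passing from `y_i` to `y_{i+1} = a_i y_i a_i` preserves this swapping
property, since `a_i` commutes with `d` and `w` for `i ≥ 5`. An element swapping `d` and `d′`
has its square commuting with both, and `y₂, y₃, y₄` are words in `a₁, a₂, a₃`, which commute
with `d` and with `y₅`.
-/

section Words

variable {G : Type*} [Group G] {b : ℕ → G}

lemma genY_succ {k : ℕ} (hk : 1 ≤ k) :
    genY b (k + 1) = b k * genY b k * b k := by
  obtain ⟨m, rfl⟩ : ∃ m, k = m + 1 := ⟨k - 1, by omega⟩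
  rcases m with _ | m
  · simp [genY]
  · rfl

lemma Commute.genY_left {x : G} {k : ℕ} (h : ∀ i, 1 ≤ i → i < k → Commute (b i) x) :
    Commute (genY b k) x := by
  induction k with
  | zero => exact Commute.one_left x
  | succ k ih =>
    rcases Nat.eq_zero_or_pos k with rfl | hk
    · exact Commute.one_left x
    · have hb := h k hk (by omega)
      rw [genY_succ hk]
      exact (hb.mul_left (ih fun i h1 h2 => h i h1 (by omega))).mul_left hb

lemma commute_genY_of_braid {k : ℕ}
    (hbraid : ∀ i, 1 ≤ i → i + 1 < k → b i * b (i + 1) * b i = b (i + 1) * b i * b (i + 1))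
    (hfar : ∀ i j, 1 ≤ i → i + 2 ≤ j → j < k → Commute (b i) (b j)) :
    ∀ i, 1 ≤ i → i + 1 < k → Commute (b i) (genY b k) := by
  induction k with
  | zero => intro i _ h; omega
  | succ k ih =>
    intro i hi hik
    have hk : 1 ≤ k := by omega
    rw [genY_succ hk]
    rcases Nat.lt_or_ge (i + 1) k with hlt | hge
    · have hbk := hfar i k hi (by omega) (by omega)
      have hy := ih (fun j h1 h2 => hbraid j h1 (by omega))
        (fun j l h1 h2 h3 => hfar j l h1 h2 (by omega)) i hi hlt
      exact (hbk.mul_right hy).mul_right hbk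
    obtain rfl : k = i + 1 := by omega
    set s := b i
    set t := b (i + 1)
    set y := genY b i
    have hst : s * t * s = t * s * t := hbraid i hi (by omega)
    have hty : Commute t y := Commute.symm <| Commute.genY_left fun j h1 h2 =>
      hfar j (i + 1) h1 (by omega) (by omega)
    show s * (t * genY b (i + 1) * t) = t * genY b (i + 1) * t * s
    rw [genY_succ hi]
    calc s * (t * (s * y * s) * t) = (s * t * s) * y * s * t := by simp only [mul_assoc]
      _ = t * s * (t * y) * s * t := by rw [hst]; simp only [mul_assoc]
      _ = t * s * y * (t * s * t) := by rw [hty.eq]; simp only [mul_assoc]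
      _ = t * (s * y * s) * t * s := by rw [← hst]; simp only [mul_assoc]

end Words

section ConjSwaps

variable {G : Type*} [Group G]

def ConjSwaps (x u v : G) : Prop := x * u * x⁻¹ = v ∧ x * v * x⁻¹ = u

variable {x u v : G}

lemma ConjSwaps.symm (h : ConjSwaps x u v) : ConjSwaps x v u := ⟨h.2, h.1⟩

lemma ConjSwaps.inv_mul_mul_eq (h : ConjSwaps x u v) : x⁻¹ * u * x = v := by
  rw [← h.2]; group

lemma ConjSwaps.commute_sq (h : ConjSwaps x u v) : Commute (x ^ 2) u := by
  have : x ^ 2 * u * (x ^ 2)⁻¹ = u := by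
    calc x ^ 2 * u * (x ^ 2)⁻¹ = x * (x * u * x⁻¹) * x⁻¹ := by rw [pow_two]; group
      _ = u := by rw [h.1, h.2]
  exact mul_inv_eq_iff_eq_mul.mp this

lemma ConjSwaps.conj_mul {c : G} (h : ConjSwaps x u v) (hu : Commute c u) (hv : Commute c v) :
    ConjSwaps (c * x * c) u v := by
  have key : ∀ {p q : G}, Commute c p → Commute c q → x * p * x⁻¹ = q →
      c * x * c * p * (c * x * c)⁻¹ = q := by
    intro p q hp hq hpq
    calc c * x * c * p * (c * x * c)⁻¹ = c * (x * (c * p * c⁻¹) * x⁻¹) * c⁻¹ := by group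
      _ = q := by rw [hp.mul_inv_cancel, hpq, hq.mul_inv_cancel]
  exact ⟨key hu hv h.1, key hv hu h.2⟩

end ConjSwaps

namespace Gamma1

variable {g : ℕ}

lemma mk_aF (i : ℕ) : PresentedGroup.mk (mcgRels g) (aF g i) = aM g i := by
  unfold aF aM
  split_ifs
  · rfl
  · exact map_one _

lemma mk_dF : PresentedGroup.mk (mcgRels g) (dF g) = dM g := rfl

lemma aM_braid {i : ℕ} (h1 : 1 ≤ i) (h2 : i + 1 ≤ 2 * g) :
    aM g i * aM g (i + 1) * aM g i = aM g (i + 1) * aM g i * aM g (i + 1) := by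
  have h := PresentedGroup.mk_eq_mk_of_mul_inv_mem (rels := mcgRels g)
    (Or.inl ⟨i, h1, h2, rfl⟩)
  simpa only [map_mul, mk_aF] using h

lemma aM_out_of_range {i : ℕ} (h : ¬(1 ≤ i ∧ i ≤ 2 * g)) : aM g i = 1 := dif_neg h

lemma commute_aM_aM {i j : ℕ} (hij : i + 2 ≤ j) : Commute (aM g i) (aM g j) := by
  by_cases hi : 1 ≤ i
  · by_cases hj : j ≤ 2 * g
    · have h := PresentedGroup.mk_eq_mk_of_mul_inv_mem (rels := mcgRels g)
        (Or.inr (Or.inl ⟨i, j, hi, hj, hij, rfl⟩))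
      exact (by simpa only [map_mul, mk_aF] using h : aM g i * aM g j = aM g j * aM g i)
    · rw [aM_out_of_range (g := g) (i := j) (by omega)]
      exact Commute.one_right _
  · rw [aM_out_of_range (g := g) (i := i) (by omega)]
    exact Commute.one_left _

lemma commute_aM_dM {j : ℕ} (hj : j ≠ 4) : Commute (aM g j) (dM g) := by
  by_cases hr : 1 ≤ j ∧ j ≤ 2 * g
  · have h := PresentedGroup.mk_eq_mk_of_mul_inv_mem (rels := mcgRels g)
      (Or.inr (Or.inr (Or.inr (Or.inl ⟨j, hr.1, hr.2, hj, rfl⟩))))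
    exact (by simpa only [map_mul, mk_aF, mk_dF] using h : dM g * aM g j = aM g j * dM g).symm
  · rw [aM_out_of_range hr]
    exact Commute.one_left _

lemma dM_mul_dpA : dM g * dpA (dM g) (aM g) = (aM g 1 * aM g 2 * aM g 3) ^ 4 := by
  have h := PresentedGroup.mk_eq_mk_of_mul_inv_mem (rels := mcgRels g)
    (Or.inr (Or.inr (Or.inr (Or.inr (Or.inl rfl)))))
  simpa only [dpA, genY, map_mul, map_inv, map_pow, mk_aF, mk_dF] using h

lemma commute_aM_genY {i k : ℕ} (hk : k ≤ 2 * g + 1) (hi : 1 ≤ i) (hik : i + 1 < k) :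
    Commute (aM g i) (genY (aM g) k) :=
  commute_genY_of_braid (b := aM g) (k := k) (fun j h1 h2 => aM_braid h1 (by omega))
    (fun _ _ _ h _ => commute_aM_aM h) i hi hik

lemma conjSwaps_genY_five (hg : 2 ≤ g) :
    ConjSwaps (genY (aM g) 5) (dM g) (dpA (dM g) (aM g)) := by
  set w := (aM g 1 * aM g 2 * aM g 3) ^ 4
  have hdp : dpA (dM g) (aM g) = (dM g)⁻¹ * w := eq_inv_mul_of_mul_eq dM_mul_dpA
  have hyw : Commute (genY (aM g) 5) w :=
    ((((commute_aM_genY (by omega) le_rfl (by omega)).mul_left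
      (commute_aM_genY (by omega) (by omega) (by omega))).mul_left
      (commute_aM_genY (by omega) (by omega) (by omega))).pow_left 4).symm
  have hdw : Commute (dM g) w :=
    ((((commute_aM_dM (by omega)).mul_left (commute_aM_dM (by omega))).mul_left
      (commute_aM_dM (by omega))).pow_left 4).symm
  refine ⟨rfl, ?_⟩
  set y := genY (aM g) 5
  have hconj : y * dM g * y⁻¹ = (dM g)⁻¹ * w := hdp
  calc y * dpA (dM g) (aM g) * y⁻¹ = (y * dM g * y⁻¹)⁻¹ * (y * w * y⁻¹) := by rw [hdp]; group
    _ = w⁻¹ * dM g * w := by rw [hconj, hyw.mul_inv_cancel]; group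
    _ = dM g := hdw.symm.inv_mul_cancel

lemma conjSwaps_genY (hg : 2 ≤ g) {i : ℕ} (h5 : 5 ≤ i) (hi : i ≤ 2 * g + 1) :
    ConjSwaps (genY (aM g) i) (dM g) (dpA (dM g) (aM g)) := by
  induction i, h5 using Nat.le_induction with
  | base => exact conjSwaps_genY_five hg
  | succ i h5 ih =>
    have hd : Commute (aM g i) (dM g) := commute_aM_dM (by omega)
    have hw : Commute (aM g i) ((aM g 1 * aM g 2 * aM g 3) ^ 4) :=
      ((((commute_aM_aM (by omega)).mul_left (commute_aM_aM (by omega))).mul_left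
        (commute_aM_aM (by omega))).pow_left 4).symm
    rw [genY_succ (by omega : 1 ≤ i)]
    refine (ih (by omega)).conj_mul hd ?_
    rw [eq_inv_mul_of_mul_eq dM_mul_dpA]
    exact hd.inv_right.mul_right hw

end Gamma1

/-- Lemma 5.2: in `Γ_{g,1}`, (i) `y_i` commutes with `d` and `d′` for `i = 2, 3, 4`
and `y_i²` commutes with `d` and `d′` for `5 ≤ i ≤ g+1`; (ii) `d′ = y_i d y_i⁻¹ =
y_i⁻¹ d y_i` for `5 ≤ i ≤ g+1`. -/
theorem y_commutation_with_d
    (g : ℕ) (hg : 2 ≤ g) :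
    (∀ i : ℕ, 2 ≤ i → i ≤ 4 →
      Commute (genY (aM g) i) (dM g) ∧
      Commute (genY (aM g) i) (dpA (dM g) (aM g))) ∧
    (∀ i : ℕ, 5 ≤ i → i ≤ g + 1 →
      Commute ((genY (aM g) i) ^ 2) (dM g) ∧
      Commute ((genY (aM g) i) ^ 2) (dpA (dM g) (aM g))) ∧
    (∀ i : ℕ, 5 ≤ i → i ≤ g + 1 →
      dpA (dM g) (aM g) = genY (aM g) i * dM g * (genY (aM g) i)⁻¹ ∧
      dpA (dM g) (aM g) = (genY (aM g) i)⁻¹ * dM g * genY (aM g) i) := by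
  have swap : ∀ i, 5 ≤ i → i ≤ g + 1 → ConjSwaps (genY (aM g) i) (dM g) (dpA (dM g) (aM g)) :=
    fun i h5 hi => Gamma1.conjSwaps_genY hg h5 (by omega)
  refine ⟨fun i _ hi4 => ?_, fun i h5 hi => ?_, fun i h5 hi => ?_⟩
  · have hd : Commute (genY (aM g) i) (dM g) :=
      Commute.genY_left fun j h1 h2 => Gamma1.commute_aM_dM (by omega)
    have hy5 : Commute (genY (aM g) i) (genY (aM g) 5) :=
      Commute.genY_left fun j h1 h2 => Gamma1.commute_aM_genY (by omega) h1 (by omega)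
    exact ⟨hd, (hy5.mul_right hd).mul_right hy5.inv_right⟩
  · exact ⟨(swap i h5 hi).commute_sq, (swap i h5 hi).symm.commute_sq⟩
  · exact ⟨(swap i h5 hi).1.symm, (swap i h5 hi).inv_mul_mul_eq.symm⟩
end
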